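/- Let k be a commutative ring, X a set, and Ω a semigroup. In DTF(X,Ω), every tree T = ∨^{m+1}_{x₁,…,x_m;(α₀,…,α_m)}(T⁽⁰⁾,…,T⁽ᵐ⁾) with m ≥ 2 factors as the product T = B₁ · B₂ · … · B_m, where B₁ = ∨²_{x₁;(α₀,α₁)}(T⁽⁰⁾,T⁽¹⁾) and B_i = ∨²_{x_i;(1,α_i)}(|,T⁽ⁱ⁾) for 2 ≤ i ≤ m; moreover, for a breadth-two tree, ∨²_{x;(α₀,α₁)}(V,W) equals stree(x) if V = W = |, equals V ≻_{α₀} stree(x) if V ≠ | = W, equals stree(x) ≺_{α₁} W if V = | ≠ W, and equals (V ≻_{α₀} stree(x)) ≺_{α₁} W if V ≠ | ≠ W. -/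
import Mathlib


/-- An `X`-valently decorated `Ω`-typed Schröder tree with at least one internal vertex.
`node c₀ mid xₘ cₘ` is the grafting `∨^{m+1}_{x₁,…,xₘ;(α₀,…,αₘ)}(T⁽⁰⁾,…,T⁽ᵐ⁾)`:
the root has children `c₀ = T⁽⁰⁾`, the children `T⁽¹⁾,…,T⁽ᵐ⁻¹⁾` listed in
`mid = [(x₁,T⁽¹⁾),…,(x_{m-1},T⁽ᵐ⁻¹⁾)]`, and the last child `cₘ = T⁽ᵐ⁾`; the root vertex
is decorated by `(x₁,…,xₘ) ∈ X^m`.  A child `none` is a leaf `|` (edge typed by the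
adjoined identity `1 ∈ Ω¹`), a child `some (t, α)` is a nonempty subtree with internal
edge typed `α ∈ Ω`. -/
inductive SchT (X Ω : Type) : Type where
  | node : Option (SchT X Ω × Ω) → List (X × Option (SchT X Ω × Ω)) → X →
      Option (SchT X Ω × Ω) → SchT X Ω

namespace SchT

variable {X Ω : Type}

/-- The single-vertex tree `stree x = ∨²_{x;(1,1)}(|,|)`. -/
def stree (x : X) : SchT X Ω := .node none [] x none

variable [Semigroup Ω] (k : Type) [CommRing k]

mutual
/-- `T ≺_ω U` on trees, with values in the free module on trees. -/
noncomputable def tprec : SchT X Ω → Ω → SchT X Ω → (SchT X Ω →₀ k)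
  | .node c0 mid xm none, ω, U => Finsupp.single (.node c0 mid xm (some (U, ω))) 1
  | .node c0 mid xm (some (t, α)), ω, U =>
      Finsupp.mapDomain (fun s => SchT.node c0 mid xm (some (s, α * ω)))
        (tsucc t α U + tprec t ω U + tdot t U)
  termination_by T _ U => sizeOf T + sizeOf U
  decreasing_by all_goals (simp_wf; omega)

/-- `T ≻_ω U` on trees, with values in the free module on trees. -/
noncomputable def tsucc : SchT X Ω → Ω → SchT X Ω → (SchT X Ω →₀ k)
  | T, ω, .node none mid yn dn => Finsupp.single (.node (some (T, ω)) mid yn dn) 1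
  | T, ω, .node (some (u, β)) mid yn dn =>
      Finsupp.mapDomain (fun s => SchT.node (some (s, ω * β)) mid yn dn)
        (tsucc T ω u + tprec T β u + tdot T u)
  termination_by T _ U => sizeOf T + sizeOf U
  decreasing_by all_goals (simp_wf; omega)

/-- `T · U` on trees, with values in the free module on trees. -/
noncomputable def tdot : SchT X Ω → SchT X Ω → (SchT X Ω →₀ k)
  | .node c0 mid xm none, .node none mid' yn dn =>
      Finsupp.single (.node c0 (mid ++ (xm, none) :: mid') yn dn) 1
  | .node c0 mid xm none, .node (some (u, β)) mid' yn dn =>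
      Finsupp.single (.node c0 (mid ++ (xm, some (u, β)) :: mid') yn dn) 1
  | .node c0 mid xm (some (t, α)), .node none mid' yn dn =>
      Finsupp.single (.node c0 (mid ++ (xm, some (t, α)) :: mid') yn dn) 1
  | .node c0 mid xm (some (t, α)), .node (some (u, β)) mid' yn dn =>
      Finsupp.mapDomain (fun s => SchT.node c0 (mid ++ (xm, some (s, α * β)) :: mid') yn dn)
        (tsucc t α u + tprec t β u + tdot t u)
  termination_by T U => sizeOf T + sizeOf U
  decreasing_by all_goals (simp_wf; omega)
end

/-- The bilinear extension of `≺_ω` to the free module `DTF(X,Ω) = SchT X Ω →₀ k`. -/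
noncomputable def dprec (ω : Ω) (a b : SchT X Ω →₀ k) : SchT X Ω →₀ k :=
  a.sum fun T ca => b.sum fun U cb => (ca * cb) • tprec k T ω U

/-- The bilinear extension of `≻_ω` to the free module `DTF(X,Ω) = SchT X Ω →₀ k`. -/
noncomputable def dsucc (ω : Ω) (a b : SchT X Ω →₀ k) : SchT X Ω →₀ k :=
  a.sum fun T ca => b.sum fun U cb => (ca * cb) • tsucc k T ω U

/-- The bilinear extension of `·` to the free module `DTF(X,Ω) = SchT X Ω →₀ k`. -/
noncomputable def dmul (a b : SchT X Ω →₀ k) : SchT X Ω →₀ k :=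
  a.sum fun T ca => b.sum fun U cb => (ca * cb) • tdot k T U

lemma dmul_single_single (T U : SchT X Ω) :
    dmul k (Finsupp.single T 1) (Finsupp.single U 1) = tdot k T U := by
  simp [dmul, Finsupp.sum_single_index]

lemma dsucc_single_single (ω : Ω) (T U : SchT X Ω) :
    dsucc k ω (Finsupp.single T 1) (Finsupp.single U 1) = tsucc k T ω U := by
  simp [dsucc, Finsupp.sum_single_index]

lemma dprec_single_single (ω : Ω) (T U : SchT X Ω) :
    dprec k ω (Finsupp.single T 1) (Finsupp.single U 1) = tprec k T ω U := by
  simp [dprec, Finsupp.sum_single_index]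

lemma tdot_right (c0 : Option (SchT X Ω × Ω)) (mid : List (X × Option (SchT X Ω × Ω)))
    (x : X) (cm : Option (SchT X Ω × Ω)) (y : X) (dy : Option (SchT X Ω × Ω)) :
    tdot k (SchT.node c0 mid x cm) (SchT.node none [] y dy)
      = Finsupp.single (SchT.node c0 (mid ++ [(x, cm)]) y dy) 1 := by
  match cm, dy with
  | none, none => rw [tdot]
  | none, some (u, β) => rw [tdot]
  | some (t, α), none => rw [tdot]
  | some (t, α), some (u, β) => rw [tdot]

lemma foldl_aux (c0 : Option (SchT X Ω × Ω)) (xm : X) (cm : Option (SchT X Ω × Ω)) :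
    ∀ (l : List (X × Option (SchT X Ω × Ω))) (mid : List (X × Option (SchT X Ω × Ω)))
      (x : X) (c : Option (SchT X Ω × Ω)),
      List.foldl (fun acc p => dmul k acc (Finsupp.single (SchT.node none [] p.1 p.2) 1))
          (Finsupp.single (SchT.node c0 mid x c) 1) (l ++ [(xm, cm)])
        = Finsupp.single (SchT.node c0 (mid ++ (x, c) :: l) xm cm) 1 := by
  intro l
  induction l with
  | nil =>
      intro mid x c
      simp [dmul_single_single, tdot_right]
  | cons p l ih =>
      intro mid x c
      rw [List.cons_append, List.foldl_cons, dmul_single_single, tdot_right, ih]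
      simp

end SchT

open SchT in
/-- In `DTF(X,Ω)`, every tree
`T = ∨^{m+1}_{x₁,…,xₘ;(α₀,…,αₘ)}(T⁽⁰⁾,…,T⁽ᵐ⁾)` with `m ≥ 2` (i.e. with nonempty middle
list) factors as `T = B₁ · B₂ · … · Bₘ` with `B₁ = ∨²_{x₁;(α₀,α₁)}(T⁽⁰⁾,T⁽¹⁾)` and
`Bᵢ = ∨²_{xᵢ;(1,αᵢ)}(|,T⁽ⁱ⁾)` for `2 ≤ i ≤ m`; moreover a breadth-two tree
`∨²_{x;(α₀,α₁)}(V,W)` equals `stree x` if `V = W = |`, equals `V ≻_{α₀} stree x` if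
`V ≠ | = W`, equals `stree x ≺_{α₁} W` if `V = | ≠ W`, and equals
`(V ≻_{α₀} stree x) ≺_{α₁} W` if `V ≠ | ≠ W`. -/
theorem DTF_factorization {X Ω : Type} [Semigroup Ω] (k : Type) [CommRing k] :
    (∀ (c0 : Option (SchT X Ω × Ω)) (x1 : X) (c1 : Option (SchT X Ω × Ω))
        (rest : List (X × Option (SchT X Ω × Ω))) (xm : X) (cm : Option (SchT X Ω × Ω)),
      Finsupp.single (SchT.node c0 ((x1, c1) :: rest) xm cm) (1 : k)
        = List.foldl (fun acc p => dmul k acc (Finsupp.single (SchT.node none [] p.1 p.2) 1))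
            (Finsupp.single (SchT.node c0 [] x1 c1) 1)
            (rest ++ [(xm, cm)])) ∧
    (∀ x : X, SchT.node (none : Option (SchT X Ω × Ω)) [] x none = stree x) ∧
    (∀ (x : X) (l : SchT X Ω) (α₀ : Ω),
      Finsupp.single (SchT.node (some (l, α₀)) [] x none) (1 : k)
        = dsucc k α₀ (Finsupp.single l 1) (Finsupp.single (stree x) 1)) ∧
    (∀ (x : X) (r : SchT X Ω) (α₁ : Ω),
      Finsupp.single (SchT.node none [] x (some (r, α₁))) (1 : k)
        = dprec k α₁ (Finsupp.single (stree x) 1) (Finsupp.single r 1)) ∧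
    (∀ (x : X) (l r : SchT X Ω) (α₀ α₁ : Ω),
      Finsupp.single (SchT.node (some (l, α₀)) [] x (some (r, α₁))) (1 : k)
        = dprec k α₁
            (dsucc k α₀ (Finsupp.single l 1) (Finsupp.single (stree x) 1))
            (Finsupp.single r 1)) := by
  refine ⟨?_, fun _ => rfl, ?_, ?_, ?_⟩
  · intro c0 x1 c1 rest xm cm
    rw [foldl_aux]
    simp
  · intro x l α₀
    rw [dsucc_single_single, stree, tsucc]
  · intro x r α₁
    rw [dprec_single_single, stree, tprec]
  · intro x l r α₀ α₁
    rw [dsucc_single_single, stree, tsucc, dprec_single_single, tprec]
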